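/- Let α, β ∈ R and σ, δ ∈ V⁰ with α+σ ∈ R and β+δ ∈ R, and set c = (β, α^∨). Then β−cσ, β+δ−cσ, β+cσ, β+δ+cσ all lie in R, and in Ŵ one has [t̂_α^σ, t̂_β^δ] = t̂_{β−cσ}^{−δ} · t̂_β^{δ} = t̂_{β+δ}^{−cσ} · t̂_β^{cσ}. -/
import Mathlib

/-- The reflection `s_α(u) = u - (u, α^∨) α` associated to a vector `α`, where
`α^∨ = 2α/(α,α)` and `B` is the bilinear form. -/
noncomputable def reflMap {V : Type*} [AddCommGroup V] [Module ℝ V] (B : V →ₗ[ℝ] V →ₗ[ℝ] ℝ)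
    (α : V) : V → V :=
  fun u => u - ((2 * B u α) / B α α) • α

/-- The defining relations of the presented group `Ŵ`: (I) `ŵ_α² = 1` and
(II) `ŵ_α ŵ_β ŵ_α = ŵ_{s_α(β)}` for `α, β ∈ R`. -/
def eawRels {V : Type*} [AddCommGroup V] [Module ℝ V] (B : V →ₗ[ℝ] V →ₗ[ℝ] ℝ)
    (R : Set V) : Set (FreeGroup R) :=
  {r | ∃ α : R, r = FreeGroup.of α * FreeGroup.of α} ∪
  {r | ∃ α β γ : R, (γ : V) = reflMap B (α : V) (β : V) ∧
        r = FreeGroup.of α * FreeGroup.of β * FreeGroup.of α * (FreeGroup.of γ)⁻¹}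

/-- The group `Ŵ` presented by generators `ŵ_α` (`α ∈ R`) and relations (I), (II). -/
abbrev EAW {V : Type*} [AddCommGroup V] [Module ℝ V] (B : V →ₗ[ℝ] V →ₗ[ℝ] ℝ)
    (R : Set V) :=
  PresentedGroup (eawRels B R)

/-- The generator `ŵ_α` of `Ŵ`. -/
def wgen {V : Type*} [AddCommGroup V] [Module ℝ V] (B : V →ₗ[ℝ] V →ₗ[ℝ] ℝ)
    (R : Set V) (α : V) (hα : α ∈ R) : EAW B R :=
  PresentedGroup.of (⟨α, hα⟩ : R)

/-- The element `t̂_α^σ = ŵ_{α+σ} ŵ_α` of `Ŵ`. -/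
def tgen {V : Type*} [AddCommGroup V] [Module ℝ V] (B : V →ₗ[ℝ] V →ₗ[ℝ] ℝ)
    (R : Set V) (α σ : V) (hα : α ∈ R) (hασ : α + σ ∈ R) : EAW B R :=
  wgen B R (α + σ) hασ * wgen B R α hα

section Aux

variable {V : Type*} [AddCommGroup V] [Module ℝ V] {B : V →ₗ[ℝ] V →ₗ[ℝ] ℝ} {R : Set V}

lemma rel_eq_one' {r : FreeGroup R} (hr : r ∈ eawRels B R) :
    PresentedGroup.mk (eawRels B R) r = 1 :=
  (QuotientGroup.eq_one_iff r).2 (Subgroup.subset_normalClosure hr)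

lemma wgen_sq {α : V} (hα : α ∈ R) : wgen B R α hα * wgen B R α hα = 1 := by
  have : PresentedGroup.mk (eawRels B R)
      (FreeGroup.of (⟨α, hα⟩ : R) * FreeGroup.of (⟨α, hα⟩ : R)) = 1 :=
    rel_eq_one' (Or.inl ⟨⟨α, hα⟩, rfl⟩)
  simpa [wgen, PresentedGroup.of] using this

lemma wgen_inv {α : V} (hα : α ∈ R) : (wgen B R α hα)⁻¹ = wgen B R α hα :=
  inv_eq_of_mul_eq_one_right (wgen_sq hα)

lemma wgen_braid {α β γ : V} (hα : α ∈ R) (hβ : β ∈ R) (hγ : γ ∈ R)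
    (hval : γ = reflMap B α β) :
    wgen B R α hα * wgen B R β hβ * wgen B R α hα = wgen B R γ hγ := by
  have h1 : PresentedGroup.mk (eawRels B R)
      (FreeGroup.of (⟨α, hα⟩ : R) * FreeGroup.of (⟨β, hβ⟩ : R) * FreeGroup.of (⟨α, hα⟩ : R) *
        (FreeGroup.of (⟨γ, hγ⟩ : R))⁻¹) = 1 :=
    rel_eq_one' (Or.inr ⟨⟨α, hα⟩, ⟨β, hβ⟩, ⟨γ, hγ⟩, hval, rfl⟩)
  have h2 : wgen B R α hα * wgen B R β hβ * wgen B R α hα * (wgen B R γ hγ)⁻¹ = 1 := by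
    simpa [wgen, PresentedGroup.of] using h1
  exact eq_of_mul_inv_eq_one h2

lemma wgen_congr {α β : V} (hα : α ∈ R) (hβ : β ∈ R) (h : α = β) :
    wgen B R α hα = wgen B R β hβ := by subst h; rfl

lemma reflMap_self {v : V} (hvv : B v v ≠ 0) : reflMap B v v = -v := by
  simp only [reflMap]
  rw [mul_div_assoc, div_self hvv, mul_one, two_smul]
  abel

lemma neg_mem_of_mem (hclos : ∀ α ∈ R, ∀ β ∈ R, reflMap B α β ∈ R)
    {v : V} (hvv : B v v ≠ 0) (hv : v ∈ R) : -v ∈ R :=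
  reflMap_self hvv ▸ hclos v hv v hv

lemma wgen_neg {v : V} (hvv : B v v ≠ 0) (hv : v ∈ R) (hnv : -v ∈ R) :
    wgen B R v hv = wgen B R (-v) hnv := by
  have hb : wgen B R v hv * wgen B R v hv * wgen B R v hv = wgen B R (-v) hnv :=
    wgen_braid hv hv hnv (reflMap_self hvv).symm
  rw [wgen_sq hv, one_mul] at hb
  exact hb

lemma wgen_braid_neg {α β γ : V} (hα : α ∈ R) (hβ : β ∈ R) (hγ : γ ∈ R)
    (hnγ : -γ ∈ R) (hγγ : B γ γ ≠ 0) (hval : -γ = reflMap B α β) :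
    wgen B R α hα * wgen B R β hβ * wgen B R α hα = wgen B R γ hγ := by
  have hb := wgen_braid hα hβ hnγ hval
  rw [hb]
  have h1 : wgen B R (-γ) hnγ = wgen B R (-(-γ)) (by rwa [neg_neg]) :=
    wgen_neg (by simpa using hγγ) hnγ (by rwa [neg_neg])
  rw [h1]
  exact wgen_congr _ _ (neg_neg γ)

end Aux
/-- For `α, β ∈ R` and `σ, δ` in the radical with `α+σ, β+δ ∈ R`, set `c = (β, α^∨)`.
Then `β−cσ, β+δ−cσ, β+cσ, β+δ+cσ ∈ R`, and in `Ŵ` one has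
`[t̂_α^σ, t̂_β^δ] = t̂_{β−cσ}^{−δ} · t̂_β^{δ} = t̂_{β+δ}^{−cσ} · t̂_β^{cσ}`,
where `[x,y] = x⁻¹y⁻¹xy`. -/
theorem commutator_tgen {V : Type*} [AddCommGroup V] [Module ℝ V]
    (B : V →ₗ[ℝ] V →ₗ[ℝ] ℝ) (R : Set V)
    (hsym : ∀ u v : V, B u v = B v u)
    (hpsd : ∀ v : V, 0 ≤ B v v)
    (hnon : ∀ α ∈ R, B α α ≠ 0)
    (hclos : ∀ α ∈ R, ∀ β ∈ R, reflMap B α β ∈ R)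
    (α β σ δ : V) (hα : α ∈ R) (hβ : β ∈ R)
    (hσ : ∀ u : V, B σ u = 0) (hδ : ∀ u : V, B δ u = 0)
    (hασ : α + σ ∈ R) (hβδ : β + δ ∈ R)
    (c : ℝ) (hc : c = 2 * B β α / B α α) :
    ∃ (h1 : β - c • σ ∈ R) (h2 : β + δ - c • σ ∈ R) (h3 : β + c • σ ∈ R)
      (h4 : β + δ + c • σ ∈ R) (h5 : β - c • σ + -δ ∈ R) (h6 : β + δ + -(c • σ) ∈ R),
      ((tgen B R α σ hα hασ)⁻¹ * (tgen B R β δ hβ hβδ)⁻¹ *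
          tgen B R α σ hα hασ * tgen B R β δ hβ hβδ =
        tgen B R (β - c • σ) (-δ) h1 h5 * tgen B R β δ hβ hβδ) ∧
      ((tgen B R α σ hα hασ)⁻¹ * (tgen B R β δ hβ hβδ)⁻¹ *
          tgen B R α σ hα hασ * tgen B R β δ hβ hβδ =
        tgen B R (β + δ) (-(c • σ)) hβδ h6 * tgen B R β (c • σ) hβ h3) := by
  have hαα := hnon α hα
  have hββ := hnon β hβ
  have hσ' : ∀ u, B u σ = 0 := fun u => (hsym u σ).trans (hσ u)
  have hδ' : ∀ u, B u δ = 0 := fun u => (hsym u δ).trans (hδ u)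
  have hba : B α β = B β α := hsym α β
  -- coefficient computations
  have K1 : 2 * B β (α + σ) / B (α + σ) (α + σ) = c := by
    rw [hc]; simp [hσ, hδ, hσ', hδ']
  have K2 : 2 * B (β + δ) (α + σ) / B (α + σ) (α + σ) = c := by
    rw [hc]; simp [hσ, hδ, hσ', hδ']
  have K3 : 2 * B (β - c • (α + σ)) α / B α α = -c := by
    rw [hc]; simp [hσ, hδ, hσ', hδ', hba]; field_simp; ring
  have K4 : 2 * B (β + δ - c • (α + σ)) α / B α α = -c := by
    rw [hc]; simp [hσ, hδ, hσ', hδ', hba]; field_simp; ring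
  have K5 : 2 * B β α / B α α = c := hc.symm
  have K5b : 2 * B (β + δ) α / B α α = c := by
    rw [hc]; simp [hσ, hδ, hσ', hδ']
  have K6 : 2 * B (β - c • α) (α + σ) / B (α + σ) (α + σ) = -c := by
    rw [hc]; simp [hσ, hδ, hσ', hδ', hba]; field_simp; ring
  have K7 : 2 * B (β + δ - c • α) (α + σ) / B (α + σ) (α + σ) = -c := by
    rw [hc]; simp [hσ, hδ, hσ', hδ', hba]; field_simp; ring
  have K8 : 2 * B (β + δ - c • σ) (β - c • σ) / B (β - c • σ) (β - c • σ) = 2 := by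
    simp [hσ, hδ, hσ', hδ']; field_simp
  have K9 : 2 * B (β - c • σ) (β + δ - c • σ) / B (β + δ - c • σ) (β + δ - c • σ) = 2 := by
    simp [hσ, hδ, hσ', hδ']; field_simp
  have K10 : 2 * B (β + δ + δ - c • σ) (β + δ) / B (β + δ) (β + δ) = 2 := by
    simp [hσ, hδ, hσ', hδ']; field_simp
  -- reflMap computations
  have rform : ∀ (x u : V) (t : ℝ), 2 * B u x / B x x = t → reflMap B x u = u - t • x := by
    intro x u t h; simp only [reflMap]; rw [h]
  have e1 : reflMap B (α + σ) β = β - c • (α + σ) := rform _ _ _ K1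
  have e2 : reflMap B (α + σ) (β + δ) = β + δ - c • (α + σ) := rform _ _ _ K2
  have e3 : reflMap B α (β - c • (α + σ)) = β - c • σ := by rw [rform _ _ _ K3]; module
  have e4 : reflMap B α (β + δ - c • (α + σ)) = β + δ - c • σ := by rw [rform _ _ _ K4]; module
  have e5 : reflMap B α β = β - c • α := rform _ _ _ K5
  have e5b : reflMap B α (β + δ) = β + δ - c • α := rform _ _ _ K5b
  have e6 : reflMap B (α + σ) (β - c • α) = β + c • σ := by rw [rform _ _ _ K6]; module
  have e7 : reflMap B (α + σ) (β + δ - c • α) = β + δ + c • σ := by rw [rform _ _ _ K7]; module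
  have e8 : reflMap B (β - c • σ) (β + δ - c • σ) = -(β - c • σ + -δ) := by
    rw [rform _ _ _ K8]; module
  have e9 : reflMap B (β + δ - c • σ) (β - c • σ) = -(β + δ + δ - c • σ) := by
    rw [rform _ _ _ K9]; module
  have e10 : reflMap B (β + δ) (β + δ + δ - c • σ) = -(β + c • σ) := by
    rw [rform _ _ _ K10]; module
  -- memberships
  have hp : β - c • (α + σ) ∈ R := e1 ▸ hclos _ hασ _ hβ
  have hq : β + δ - c • (α + σ) ∈ R := e2 ▸ hclos _ hασ _ hβδ
  have h1 : β - c • σ ∈ R := e3 ▸ hclos _ hα _ hp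
  have h2 : β + δ - c • σ ∈ R := e4 ▸ hclos _ hα _ hq
  have hp5 : β - c • α ∈ R := e5 ▸ hclos _ hα _ hβ
  have hp5b : β + δ - c • α ∈ R := e5b ▸ hclos _ hα _ hβδ
  have h3 : β + c • σ ∈ R := e6 ▸ hclos _ hασ _ hp5
  have h4 : β + δ + c • σ ∈ R := e7 ▸ hclos _ hασ _ hp5b
  have hm8 : -(β - c • σ + -δ) ∈ R := e8 ▸ hclos _ h1 _ h2
  have h5 : β - c • σ + -δ ∈ R := by
    have := neg_mem_of_mem hclos (hnon _ hm8) hm8; rwa [neg_neg] at this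
  have hm9 : -(β + δ + δ - c • σ) ∈ R := e9 ▸ hclos _ h2 _ h1
  have h9 : β + δ + δ - c • σ ∈ R := by
    have := neg_mem_of_mem hclos (hnon _ hm9) hm9; rwa [neg_neg] at this
  have hm10 : -(β + c • σ) ∈ R := e10 ▸ hclos _ hβδ _ h9
  have h6 : β + δ + -(c • σ) ∈ R := by rw [← sub_eq_add_neg]; exact h2
  -- braid relations
  have b1 := wgen_braid (B := B) hασ hβ hp e1.symm
  have b2 := wgen_braid (B := B) hασ hβδ hq e2.symm
  have b3 := wgen_braid (B := B) hα hp h1 e3.symm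
  have b4 := wgen_braid (B := B) hα hq h2 e4.symm
  have b5 := wgen_braid_neg (B := B) h1 h2 h5 hm8 (hnon _ h5) e8.symm
  have b6 := wgen_braid_neg (B := B) h2 h1 h9 hm9 (hnon _ h9) e9.symm
  have b7 := wgen_braid_neg (B := B) hβδ h9 h3 hm10 (hnon _ h3) e10.symm
  -- cancellation and move lemmas
  have C : ∀ (v : V) (hv : v ∈ R) (x : EAW B R),
      wgen B R v hv * (wgen B R v hv * x) = x := by
    intro v hv x; rw [← mul_assoc, wgen_sq hv, one_mul]
  have M : ∀ {a b' c' : V} {ha : a ∈ R} {hb : b' ∈ R} {hcc : c' ∈ R},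
      wgen B R a ha * wgen B R b' hb * wgen B R a ha = wgen B R c' hcc →
      ∀ x : EAW B R, wgen B R a ha * (wgen B R b' hb * x) =
        wgen B R c' hcc * (wgen B R a ha * x) := by
    intro a b' c' ha hb hcc hbr x
    rw [← hbr]; simp only [mul_assoc, C]
  have cg : wgen B R (β + δ + -(c • σ)) h6 = wgen B R (β + δ - c • σ) h2 :=
    wgen_congr _ _ (by rw [sub_eq_add_neg])
  refine ⟨h1, h2, h3, h4, h5, h6, ?_, ?_⟩
  · simp only [tgen, mul_inv_rev, wgen_inv, mul_assoc]
    rw [M b1, M b2, C, M b3, M b4, C, ← b5]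
    simp only [mul_assoc, C]
  · simp only [tgen, mul_inv_rev, wgen_inv, mul_assoc]
    rw [M b1, M b2, C, M b3, M b4, C, cg, ← b7, ← b6]
    simp only [mul_assoc, C]
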